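/- arXiv:2010.14260 — 2 statements merged into one kernel-verified Lean document; each statement's English description precedes it below -/
import Mathlib

section
/- Let a mixture of two concentric Mallows models M(σ_0, θ_g) and M(σ_0, θ_b) with mixture weight r ∈ [0,1] on the expert component satisfy E[d(β, σ_0)] ≥ c · E[d(γ, σ_0)] for some c ≥ 2, where γ ~ M(σ_0,θ_g), β ~ M(σ_0,θ_b). For a random permutation σ from the mixture, define δ_σ = E_{σ'~mixture}[d(σ, σ')]. Then E[δ_β] − E[δ_γ] ≥ (c−2)·r·E[d(γ, σ_0)] (up to constant factors), i.e., the expected mean distance of a non-expert ranking exceeds that of an expert ranking by at least a positive quantity of order c·r·E[d(γ,σ_0)]. -/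
open Finset

/-- Kendall's-τ distance: number of pairs `i < j` on which `σ` and `π` disagree in
relative order. -/
def kendall (n : ℕ) (σ π : Equiv.Perm (Fin n)) : ℕ :=
  (Finset.univ.filter (fun p : Fin n × Fin n =>
    p.1 < p.2 ∧ ((σ p.1 < σ p.2 ∧ π p.2 < π p.1) ∨ (σ p.2 < σ p.1 ∧ π p.1 < π p.2)))).card

/-- Inversion vector coordinate (0-indexed `j`): `V_j(σ) = #{i > j : σ(i) < σ(j)}`. -/
def invVec (n : ℕ) (σ : Equiv.Perm (Fin n)) (j : Fin n) : ℕ :=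
  (Finset.univ.filter (fun i : Fin n => j < i ∧ σ i < σ j)).card

/-- `ψ_{n,j} = (1 - exp(-θ(n-j+1)))/(1 - exp(-θ))`, with 1-indexed `j`. -/
noncomputable def psiFac (n : ℕ) (θ : ℝ) (j : ℕ) : ℝ :=
  (1 - Real.exp (-θ * ((n : ℝ) - j + 1))) / (1 - Real.exp (-θ))

/-- `ψ_n = ∏_{j=1}^{n-1} ψ_{n,j}`. -/
noncomputable def psiProd (n : ℕ) (θ : ℝ) : ℝ :=
  ∏ j ∈ Finset.range (n - 1), psiFac n θ (j + 1)

/-- Mallows probability mass function with center `σ₀` and dispersion `θ`. -/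
noncomputable def mallows (n : ℕ) (θ : ℝ) (σ₀ σ : Equiv.Perm (Fin n)) : ℝ :=
  Real.exp (-θ * kendall n σ σ₀) / ∑ π : Equiv.Perm (Fin n), Real.exp (-θ * kendall n π σ₀)

/-- Expected mean distance (to an independent draw of the mixture) of a random ranking
from the mixture `r·M(σ₀,θ_g) + (1−r)·M(σ₀,θ_b)`, for a ranking drawn from `M(σ₀,θ)`. -/
noncomputable def meanDistMix (n : ℕ) (θg θb r θ : ℝ) (σ₀ : Equiv.Perm (Fin n)) : ℝ :=
  ∑ σ : Equiv.Perm (Fin n), mallows n θ σ₀ σ *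
    ∑ σ' : Equiv.Perm (Fin n),
      (r * mallows n θg σ₀ σ' + (1 - r) * mallows n θb σ₀ σ') * kendall n σ σ'

/-!
Write the Kendall distance as a sum, over pairs of positions, of discordance indicators. For
independent `σ, σ'` the discordance of `σ` and `σ'` on a pair is the exclusive or of their
discordances with `σ₀`. So if `p_θ` is the probability that `M(σ₀, θ)` reverses the pair and
`μ = r p_θg + (1 - r) p_θb`, the pair contributes `p_θ + μ - 2 p_θ μ` to the mean distance of a
ranking drawn from `M(σ₀, θ)`, and `(p_θb - p_θg)(1 - 2μ) ≥ r (p_θb - 2 p_θg)` to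
`E[δ_β] - E[δ_γ]` as soon as `p_θg ≤ p_θb ≤ 1/2`. Summing over the pairs gives
`r (E[d(β, σ₀)] - 2 E[d(γ, σ₀)]) ≥ (c - 2) r E[d(γ, σ₀)]`.

After recentring at the identity, `p_θ = W_θ(j, i) / (W_θ(i, j) + W_θ(j, i))` for some positions
`i < j`, where `W_θ(i, j)` is the Mallows weight of the permutations with `ρ i < ρ j`. Inserting
a value `p` in front of, or `w` behind, a permutation of `n` adds `p`, resp. `n - w`, inversions,
so `W_θ(i, j)` and `W_θ(j, i)` are a common multiple of the same weights for the two end positions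
of a window of `m + 2` positions. There the values `p` in front and `v` behind (among the
remaining `m + 1`) contribute the exponent `e = p + (m - v)`, and the ends are in order iff
`e ≤ m`. The reflection `e ↦ 2m + 1 - e` gives `W_θ(j, i) ≤ W_θ(i, j)` for `θ ≥ 0`; and since
every exponent of one order is below every exponent of the other,
`W_s(j, i) W_t(i, j) ≤ W_s(i, j) W_t(j, i)` for `t ≤ s`, i.e. `p_θ` is antitone.
-/

namespace Mallows

open Equiv

variable {n : ℕ}

lemma sum_exp_mul_sum_exp_le {ι κ : Type*} (A : Finset ι) (B : Finset κ) (a : ι → ℝ)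
    (b : κ → ℝ) (hab : ∀ i ∈ A, ∀ j ∈ B, a i ≤ b j) {s t : ℝ} (hts : t ≤ s) :
    (∑ j ∈ B, Real.exp (-s * b j)) * ∑ i ∈ A, Real.exp (-t * a i) ≤
      (∑ i ∈ A, Real.exp (-s * a i)) * ∑ j ∈ B, Real.exp (-t * b j) := by
  rw [sum_mul_sum, sum_mul_sum, sum_comm]
  refine sum_le_sum fun i hi => sum_le_sum fun j hj => ?_
  rw [← Real.exp_add, ← Real.exp_add, Real.exp_le_exp]
  nlinarith [mul_nonneg (sub_nonneg.2 hts) (sub_nonneg.2 (hab i hi j hj))]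

lemma sum_mul_sum_mul_of_eq_xor {ι : Type*} [Fintype ι] {μ ν : ι → ℝ} (hμ : ∑ i, μ i = 1)
    (hν : ∑ j, ν j = 1) (f : ι → ℝ) (g : ι → ι → ℝ)
    (hg : ∀ i j, g i j = f i + f j - 2 * f i * f j) :
    ∑ i, μ i * ∑ j, ν j * g i j =
      (∑ i, μ i * f i) + (∑ j, ν j * f j) - 2 * (∑ i, μ i * f i) * ∑ j, ν j * f j := by
  set Eν := ∑ j, ν j * f j
  have hrow : ∀ i, ∑ j, ν j * g i j = f i + Eν - 2 * f i * Eν := fun i => by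
    calc ∑ j, ν j * g i j = ∑ j, (f i * ν j + ν j * f j - 2 * f i * (ν j * f j)) :=
          sum_congr rfl fun j _ => by rw [hg]; ring
      _ = f i + Eν - 2 * f i * Eν := by
          rw [sum_sub_distrib, sum_add_distrib, ← mul_sum, ← mul_sum, hν, mul_one]
  calc ∑ i, μ i * ∑ j, ν j * g i j = ∑ i, (μ i * f i + Eν * μ i - 2 * Eν * (μ i * f i)) :=
        sum_congr rfl fun i _ => by rw [hrow]; ring
    _ = _ := by rw [sum_sub_distrib, sum_add_distrib, ← mul_sum, ← mul_sum, hμ]; ring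

noncomputable def discordInd (σ π : Perm (Fin n)) (q : Fin n × Fin n) : ℝ :=
  if q.1 < q.2 ∧ ((σ q.1 < σ q.2 ∧ π q.2 < π q.1) ∨ (σ q.2 < σ q.1 ∧ π q.1 < π q.2))
  then 1 else 0

lemma kendall_eq_sum_discordInd (σ π : Perm (Fin n)) :
    (kendall n σ π : ℝ) = ∑ q, discordInd σ π q := by
  rw [kendall, card_filter, Nat.cast_sum]
  simp only [Nat.cast_ite, Nat.cast_one, Nat.cast_zero, discordInd]

lemma discordInd_eq_xor (σ π ρ : Perm (Fin n)) (q : Fin n × Fin n) :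
    discordInd σ π q =
      discordInd σ ρ q + discordInd π ρ q - 2 * discordInd σ ρ q * discordInd π ρ q := by
  by_cases hq : q.1 < q.2
  · have hne : ∀ τ : Perm (Fin n), τ q.1 < τ q.2 ∨ τ q.2 < τ q.1 := fun τ =>
      (τ.injective.ne hq.ne).lt_or_gt
    rcases hne σ with h1 | h1 <;> rcases hne π with h2 | h2 <;> rcases hne ρ with h3 | h3 <;>
      simp [discordInd, hq, h1, h2, h3, asymm h1, asymm h2, asymm h3] <;> norm_num
  · simp [discordInd, hq]

lemma kendall_eq_card (σ π : Perm (Fin n)) :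
    kendall n σ π = #{p : Fin n × Fin n | σ p.1 < σ p.2 ∧ π p.2 < π p.1} := by
  rw [kendall]
  refine card_nbij' (fun p => if σ p.1 < σ p.2 then p else p.swap)
    (fun p => if p.1 < p.2 then p else p.swap) ?_ ?_ ?_ ?_ <;>
  · rintro ⟨a, b⟩ h
    simp only [coe_filter, mem_univ, true_and] at h ⊢
    split_ifs <;> grind

lemma kendall_mul_right (σ π τ : Perm (Fin n)) :
    kendall n (σ * τ) (π * τ) = kendall n σ π := by
  rw [kendall_eq_card, kendall_eq_card]
  exact card_equiv (prodCongr τ τ) fun _ => by simp only [mem_filter, mem_univ, true_and]; rfl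

lemma kendall_mul_right_self (ρ σ₀ : Perm (Fin n)) :
    kendall n (ρ * σ₀) σ₀ = kendall n ρ 1 := by
  simpa using kendall_mul_right ρ 1 σ₀

lemma kendall_one_eq_sum (ρ : Perm (Fin n)) :
    kendall n ρ 1 = ∑ a, ∑ b, if a < b ∧ ρ b < ρ a then 1 else 0 := by
  rw [kendall, card_filter, Fintype.sum_prod_type]
  refine sum_congr rfl fun a _ => sum_congr rfl fun b _ => if_congr ?_ rfl rfl
  simp only [Perm.coe_one, id_eq]
  grind

def insertAt (k p : Fin (n + 1)) (τ : Perm (Fin n)) : Perm (Fin (n + 1)) :=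
  (finSuccEquiv' k).trans ((Equiv.optionCongr τ).trans (finSuccEquiv' p).symm)

@[simp] lemma insertAt_apply_self (k p : Fin (n + 1)) (τ : Perm (Fin n)) :
    insertAt k p τ k = p := by
  simp [insertAt]

@[simp] lemma insertAt_apply_succAbove (k p : Fin (n + 1)) (τ : Perm (Fin n)) (i : Fin n) :
    insertAt k p τ (k.succAbove i) = p.succAbove (τ i) := by
  simp [insertAt]

@[simp] lemma insertAt_zero_apply_succ (p : Fin (n + 1)) (τ : Perm (Fin n)) (i : Fin n) :
    insertAt 0 p τ i.succ = p.succAbove (τ i) := by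
  rw [← Fin.succAbove_zero_apply, insertAt_apply_succAbove]

@[simp] lemma insertAt_last_apply_castSucc (p : Fin (n + 1)) (τ : Perm (Fin n)) (i : Fin n) :
    insertAt (Fin.last n) p τ i.castSucc = p.succAbove (τ i) := by
  rw [← Fin.succAbove_last_apply, insertAt_apply_succAbove]

lemma insertAt_bijective (k : Fin (n + 1)) :
    Function.Bijective (fun x : Fin (n + 1) × Perm (Fin n) => insertAt k x.1 x.2) := by
  rw [Fintype.bijective_iff_injective_and_card]
  refine ⟨fun ⟨p, τ⟩ ⟨p', τ'⟩ h => ?_, by simp [Fintype.card_perm, Nat.factorial_succ]⟩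
  have hp : p = p' := by simpa using congr($h k)
  subst hp
  have hτ : τ = τ' := Equiv.ext fun i => Fin.succAbove_right_injective (p := p) <| by
    simpa using congr($h (k.succAbove i))
  rw [hτ]

lemma sum_perm_eq_sum_insertAt {M : Type*} [AddCommMonoid M] (k : Fin (n + 1))
    (f : Perm (Fin (n + 1)) → M) : ∑ ρ, f ρ = ∑ p, ∑ τ, f (insertAt k p τ) := by
  rw [← Equiv.sum_comp (Equiv.ofBijective _ (insertAt_bijective k)), Fintype.sum_prod_type]
  rfl

lemma card_filter_val_apply_lt (τ : Perm (Fin n)) (m : ℕ) :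
    #{i | (τ i : ℕ) < m} = min n m := by
  rw [← Fin.card_filter_val_lt]
  exact card_equiv τ fun _ => by simp

lemma kendall_insertAt_zero (p : Fin (n + 1)) (τ : Perm (Fin n)) :
    kendall (n + 1) (insertAt 0 p τ) 1 = p + kendall n τ 1 := by
  have hfirst :
      (∑ b, if (0 : Fin (n + 1)) < b ∧ insertAt 0 p τ b < p then 1 else 0) = (p : ℕ) := by
    simp only [Fin.sum_univ_succ, lt_self_iff_false, false_and, if_false, zero_add,
      Fin.succ_pos, true_and, insertAt_zero_apply_succ, Fin.succAbove_lt_iff_castSucc_lt]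
    simp only [Fin.lt_def, Fin.val_castSucc]
    rw [← card_filter, card_filter_val_apply_lt, min_eq_right (Nat.lt_succ_iff.mp p.isLt)]
  rw [kendall_one_eq_sum, kendall_one_eq_sum, Fin.sum_univ_succ, insertAt_apply_self, hfirst]
  congr 1
  refine sum_congr rfl fun a _ => ?_
  rw [Fin.sum_univ_succ]
  simp [Fin.succAbove_lt_succAbove_iff]

lemma kendall_insertAt_last (w : Fin (n + 1)) (τ : Perm (Fin n)) :
    kendall (n + 1) (insertAt (Fin.last n) w τ) 1 = w.rev + kendall n τ 1 := by
  have hlast : (∑ b, if Fin.last n < b ∧ insertAt (Fin.last n) w τ b < w then 1 else 0) = 0 :=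
    sum_eq_zero fun b _ => if_neg fun h => (Fin.le_last b).not_gt h.1
  have hcount : #{a | (w : ℕ) ≤ τ a} = (w.rev : ℕ) := by
    rw [filter_congr fun a _ => (not_lt (a := (τ a : ℕ))).symm, filter_not, card_sdiff,
      inter_univ, card_filter_val_apply_lt]
    simp [Fin.val_rev, min_eq_right (Nat.lt_succ_iff.mp w.isLt)]
  rw [kendall_one_eq_sum, kendall_one_eq_sum, Fin.sum_univ_castSucc, insertAt_apply_self, hlast,
    add_zero, ← hcount, card_filter, ← sum_add_distrib]
  refine sum_congr rfl fun a _ => ?_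
  simp only [Fin.sum_univ_castSucc, insertAt_last_apply_castSucc, insertAt_apply_self,
    Fin.castSucc_lt_castSucc_iff, Fin.succAbove_lt_succAbove_iff, Fin.castSucc_lt_last, true_and,
    Fin.lt_succAbove_iff_le_castSucc, Fin.le_def, Fin.val_castSucc]
  ring

def endpointExp (m : ℕ) (x : Fin (m + 2) × Fin (m + 1)) : ℕ := x.1 + x.2.rev

noncomputable def lowSum (m : ℕ) (θ : ℝ) : ℝ :=
  ∑ x with endpointExp m x ≤ m, Real.exp (-θ * endpointExp m x)

noncomputable def highSum (m : ℕ) (θ : ℝ) : ℝ :=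
  ∑ x with m < endpointExp m x, Real.exp (-θ * endpointExp m x)

lemma highSum_mul_lowSum_le (m : ℕ) {s t : ℝ} (hts : t ≤ s) :
    highSum m s * lowSum m t ≤ lowSum m s * highSum m t :=
  sum_exp_mul_sum_exp_le _ _ _ _ (fun x hx y hy => by
    simp only [mem_filter] at hx hy; exact_mod_cast hx.2.trans hy.2.le) hts

lemma highSum_le_lowSum (m : ℕ) {θ : ℝ} (hθ : 0 ≤ θ) : highSum m θ ≤ lowSum m θ := by
  let φ := prodCongr (Fin.revPerm : Perm (Fin (m + 2))) (Fin.revPerm : Perm (Fin (m + 1)))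
  have hφ : ∀ x, endpointExp m (φ x) + endpointExp m x = 2 * m + 1 := fun x => by
    simp only [endpointExp, φ, prodCongr_apply, Prod.map, Fin.revPerm_apply, Fin.val_rev]
    omega
  rw [highSum, lowSum, sum_filter, sum_filter, ← φ.sum_comp]
  refine sum_le_sum fun x _ => ?_
  have := hφ x
  split_ifs with h1 h2 h2
  · rw [Real.exp_le_exp]
    have : (endpointExp m x : ℝ) ≤ endpointExp m (φ x) := by exact_mod_cast (by omega)
    nlinarith
  · omega
  · exact (Real.exp_pos _).le
  · rfl

lemma lt_succAbove_iff_endpointExp_le {m : ℕ} (x : Fin (m + 2) × Fin (m + 1)) :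
    x.1 < x.1.succAbove x.2 ↔ endpointExp m x ≤ m := by
  rw [Fin.lt_succAbove_iff_le_castSucc, Fin.le_def, Fin.val_castSucc, endpointExp, Fin.val_rev]
  omega

lemma succAbove_lt_iff_lt_endpointExp {m : ℕ} (x : Fin (m + 2) × Fin (m + 1)) :
    x.1.succAbove x.2 < x.1 ↔ m < endpointExp m x := by
  rw [Fin.succAbove_lt_iff_castSucc_lt, Fin.lt_def, Fin.val_castSucc, endpointExp, Fin.val_rev]
  omega

noncomputable def mallowsNorm (n : ℕ) (θ : ℝ) : ℝ :=
  ∑ ρ : Perm (Fin n), Real.exp (-θ * kendall n ρ 1)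

lemma mallowsNorm_pos (n : ℕ) (θ : ℝ) : 0 < mallowsNorm n θ :=
  sum_pos (fun _ _ => Real.exp_pos _) univ_nonempty

noncomputable def weightLT (n : ℕ) (θ : ℝ) (i j : Fin n) : ℝ :=
  ∑ ρ : Perm (Fin n), if ρ i < ρ j then Real.exp (-θ * kendall n ρ 1) else 0

lemma mallowsNorm_eq_weightLT_add (θ : ℝ) {a b : Fin n} (hab : a ≠ b) :
    mallowsNorm n θ = weightLT n θ a b + weightLT n θ b a := by
  rw [mallowsNorm, weightLT, weightLT, ← sum_add_distrib]
  refine sum_congr rfl fun ρ _ => ?_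
  rcases (ρ.injective.ne hab).lt_or_gt with h | h <;> simp [h, asymm h]

lemma weightLT_succAbove (k : Fin (n + 1)) (g : Fin (n + 1) → ℕ)
    (hg : ∀ p τ, kendall (n + 1) (insertAt k p τ) 1 = g p + kendall n τ 1)
    (θ : ℝ) (i j : Fin n) :
    weightLT (n + 1) θ (k.succAbove i) (k.succAbove j) =
      (∑ p, Real.exp (-θ * g p)) * weightLT n θ i j := by
  rw [weightLT, sum_perm_eq_sum_insertAt k, sum_mul]
  refine sum_congr rfl fun p _ => ?_
  rw [weightLT, mul_sum]
  refine sum_congr rfl fun τ _ => ?_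
  simp only [insertAt_apply_succAbove, Fin.succAbove_lt_succAbove_iff, hg, Nat.cast_add, mul_add,
    Real.exp_add, mul_ite, mul_zero]

lemma weightLT_succ (θ : ℝ) (i j : Fin n) :
    weightLT (n + 1) θ i.succ j.succ =
      (∑ p : Fin (n + 1), Real.exp (-θ * p)) * weightLT n θ i j := by
  simpa only [Fin.succAbove_zero_apply] using
    weightLT_succAbove 0 (fun p => p) kendall_insertAt_zero θ i j

lemma weightLT_castSucc (θ : ℝ) (i j : Fin n) :
    weightLT (n + 1) θ i.castSucc j.castSucc =
      (∑ p : Fin (n + 1), Real.exp (-θ * p.rev)) * weightLT n θ i j := by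
  simpa only [Fin.succAbove_last_apply] using
    weightLT_succAbove (Fin.last n) (fun p => p.rev) kendall_insertAt_last θ i j

lemma sum_perm_endpoints {m : ℕ} (θ : ℝ) (f : Fin (m + 2) → Fin (m + 2) → ℝ) :
    ∑ ρ : Perm (Fin (m + 2)), f (ρ 0) (ρ (Fin.last (m + 1))) * Real.exp (-θ * kendall _ ρ 1) =
      (∑ x : Fin (m + 2) × Fin (m + 1),
        f x.1 (x.1.succAbove x.2) * Real.exp (-θ * endpointExp m x)) * mallowsNorm m θ := by
  rw [sum_perm_eq_sum_insertAt 0, Fintype.sum_prod_type, sum_mul]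
  refine sum_congr rfl fun p _ => ?_
  rw [sum_perm_eq_sum_insertAt (Fin.last m), sum_mul]
  refine sum_congr rfl fun v _ => ?_
  rw [mallowsNorm, mul_sum]
  refine sum_congr rfl fun μ _ => ?_
  rw [← Fin.succ_last, insertAt_zero_apply_succ, insertAt_apply_self, insertAt_apply_self,
    kendall_insertAt_zero, kendall_insertAt_last, endpointExp, mul_assoc, ← Real.exp_add]
  congr 2
  push_cast
  ring

lemma weightLT_zero_last (m : ℕ) (θ : ℝ) :
    weightLT (m + 2) θ 0 (Fin.last (m + 1)) = lowSum m θ * mallowsNorm m θ := by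
  have h := sum_perm_endpoints (m := m) θ fun a b => if a < b then 1 else 0
  simp only [boole_mul, lt_succAbove_iff_endpointExp_le] at h
  rw [weightLT, lowSum, sum_filter, h]

lemma weightLT_last_zero (m : ℕ) (θ : ℝ) :
    weightLT (m + 2) θ (Fin.last (m + 1)) 0 = highSum m θ * mallowsNorm m θ := by
  have h := sum_perm_endpoints (m := m) θ fun a b => if b < a then 1 else 0
  simp only [boole_mul, succAbove_lt_iff_lt_endpointExp] at h
  rw [weightLT, highSum, sum_filter, h]

def EndpointProportional (i j : Fin n) : Prop :=
  ∃ m, ∀ θ, ∃ C, 0 ≤ C ∧ weightLT n θ i j = C * lowSum m θ ∧ weightLT n θ j i = C * highSum m θ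

lemma EndpointProportional.of_eq_mul {n' : ℕ} {i j : Fin n} {a b : Fin n'}
    (h : EndpointProportional i j) (G : ℝ → ℝ) (hG : ∀ θ, 0 ≤ G θ)
    (hab : ∀ θ, weightLT n' θ a b = G θ * weightLT n θ i j)
    (hba : ∀ θ, weightLT n' θ b a = G θ * weightLT n θ j i) : EndpointProportional a b := by
  obtain ⟨m, hm⟩ := h
  refine ⟨m, fun θ => ?_⟩
  obtain ⟨C, hC, h1, h2⟩ := hm θ
  exact ⟨G θ * C, mul_nonneg (hG θ) hC, by rw [hab, h1, mul_assoc], by rw [hba, h2, mul_assoc]⟩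

lemma endpointProportional_zero_last (m : ℕ) :
    EndpointProportional (0 : Fin (m + 2)) (Fin.last (m + 1)) :=
  ⟨m, fun θ => ⟨mallowsNorm m θ, (mallowsNorm_pos m θ).le,
    by rw [weightLT_zero_last, mul_comm], by rw [weightLT_last_zero, mul_comm]⟩⟩

lemma endpointProportional_of_lt : ∀ {n : ℕ} {i j : Fin n}, i < j → EndpointProportional i j
  | 0, i, _, _ => i.elim0
  | n + 1, i, j, hij => by
    have hexp : ∀ (g : Fin (n + 1) → ℕ) θ, 0 ≤ ∑ p, Real.exp (-θ * g p) :=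
      fun g θ => sum_nonneg fun _ _ => (Real.exp_pos _).le
    by_cases hj : j = Fin.last n
    · subst hj
      by_cases hi : i = 0
      · subst hi
        obtain _ | m := n
        · exact absurd hij (lt_irrefl _)
        exact endpointProportional_zero_last m
      obtain ⟨i', rfl⟩ := Fin.exists_succ_eq.2 hi
      obtain ⟨j', hj'⟩ := Fin.exists_succ_eq.2 (Fin.ne_zero_of_lt hij)
      rw [← hj'] at hij ⊢
      exact (endpointProportional_of_lt (Fin.succ_lt_succ_iff.1 hij)).of_eq_mul _
        (hexp fun p => p) (weightLT_succ · i' j') (weightLT_succ · j' i')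
    · obtain ⟨j', rfl⟩ := Fin.exists_castSucc_eq.2 hj
      obtain ⟨i', rfl⟩ := Fin.exists_castSucc_eq.2 (Fin.ne_last_of_lt hij)
      exact (endpointProportional_of_lt (Fin.castSucc_lt_castSucc_iff.1 hij)).of_eq_mul _
        (hexp fun p => p.rev) (weightLT_castSucc · i' j') (weightLT_castSucc · j' i')

lemma weightLT_swap_le {θ : ℝ} (hθ : 0 ≤ θ) {i j : Fin n} (hij : i < j) :
    weightLT n θ j i ≤ weightLT n θ i j := by
  obtain ⟨m, hm⟩ := endpointProportional_of_lt hij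
  obtain ⟨C, hC, h1, h2⟩ := hm θ
  rw [h1, h2]
  exact mul_le_mul_of_nonneg_left (highSum_le_lowSum m hθ) hC

lemma weightLT_mul_weightLT_le {s t : ℝ} (hts : t ≤ s) {i j : Fin n} (hij : i < j) :
    weightLT n s j i * weightLT n t i j ≤ weightLT n s i j * weightLT n t j i := by
  obtain ⟨m, hm⟩ := endpointProportional_of_lt hij
  obtain ⟨C, hC, hs1, hs2⟩ := hm s
  obtain ⟨D, hD, ht1, ht2⟩ := hm t
  rw [hs1, hs2, ht1, ht2]
  have := mul_le_mul_of_nonneg_left (highSum_mul_lowSum_le m hts) (mul_nonneg hC hD)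
  linarith

lemma sum_mallows (θ : ℝ) (σ₀ : Perm (Fin n)) : ∑ σ, mallows n θ σ₀ σ = 1 := by
  simp only [mallows, ← sum_div]
  exact div_self (sum_pos (fun _ _ => Real.exp_pos _) univ_nonempty).ne'

noncomputable def discordProb (n : ℕ) (θ : ℝ) (σ₀ : Perm (Fin n)) (q : Fin n × Fin n) : ℝ :=
  ∑ σ, mallows n θ σ₀ σ * discordInd σ σ₀ q

lemma discordProb_of_not_lt (θ : ℝ) (σ₀ : Perm (Fin n)) {q : Fin n × Fin n}
    (hq : ¬ q.1 < q.2) : discordProb n θ σ₀ q = 0 :=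
  sum_eq_zero fun σ _ => by simp [discordInd, hq]

lemma exists_discordProb_eq (σ₀ : Perm (Fin n)) {q : Fin n × Fin n} (hq : q.1 < q.2) :
    ∃ a b : Fin n, a < b ∧ ∀ θ, discordProb n θ σ₀ q = weightLT n θ b a / mallowsNorm n θ := by
  obtain ⟨a, b, hab, hdisc⟩ : ∃ a b : Fin n, a < b ∧
      ∀ ρ : Perm (Fin n), discordInd (ρ * σ₀) σ₀ q = if ρ b < ρ a then 1 else 0 := by
    rcases (σ₀.injective.ne hq.ne).lt_or_gt with h | h
    · exact ⟨_, _, h, fun ρ => by simp [discordInd, hq, h, asymm h]⟩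
    · exact ⟨_, _, h, fun ρ => by simp [discordInd, hq, h, asymm h]⟩
  refine ⟨a, b, hab, fun θ => ?_⟩
  have hnorm : ∑ π, Real.exp (-θ * kendall n π σ₀) = mallowsNorm n θ := by
    rw [mallowsNorm, ← Equiv.sum_comp (Equiv.mulRight σ₀)]
    simp only [coe_mulRight, kendall_mul_right_self]
  rw [discordProb, ← Equiv.sum_comp (Equiv.mulRight σ₀), weightLT, sum_div]
  refine sum_congr rfl fun ρ _ => ?_
  simp only [coe_mulRight, mallows, hnorm, kendall_mul_right_self, hdisc]
  split_ifs <;> simp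

lemma discordProb_nonneg (θ : ℝ) (σ₀ : Perm (Fin n)) (q : Fin n × Fin n) :
    0 ≤ discordProb n θ σ₀ q :=
  sum_nonneg fun _ _ => mul_nonneg (div_nonneg (Real.exp_pos _).le
    (sum_nonneg fun _ _ => (Real.exp_pos _).le)) (by unfold discordInd; split_ifs <;> norm_num)

lemma discordProb_le_half {θ : ℝ} (hθ : 0 ≤ θ) (σ₀ : Perm (Fin n)) (q : Fin n × Fin n) :
    discordProb n θ σ₀ q ≤ 1 / 2 := by
  by_cases hq : q.1 < q.2
  · obtain ⟨a, b, hab, h⟩ := exists_discordProb_eq σ₀ hq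
    rw [h, div_le_iff₀ (mallowsNorm_pos n θ), mallowsNorm_eq_weightLT_add θ hab.ne]
    linarith [weightLT_swap_le hθ hab]
  · rw [discordProb_of_not_lt θ σ₀ hq]
    norm_num

lemma discordProb_antitone {s t : ℝ} (hts : t ≤ s) (σ₀ : Perm (Fin n)) (q : Fin n × Fin n) :
    discordProb n s σ₀ q ≤ discordProb n t σ₀ q := by
  by_cases hq : q.1 < q.2
  · obtain ⟨a, b, hab, h⟩ := exists_discordProb_eq σ₀ hq
    rw [h, h, div_le_div_iff₀ (mallowsNorm_pos n s) (mallowsNorm_pos n t),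
      mallowsNorm_eq_weightLT_add s hab.ne, mallowsNorm_eq_weightLT_add t hab.ne]
    nlinarith [weightLT_mul_weightLT_le hts hab]
  · rw [discordProb_of_not_lt s σ₀ hq, discordProb_of_not_lt t σ₀ hq]

lemma sum_mallows_mul_kendall (θ : ℝ) (σ₀ : Perm (Fin n)) :
    ∑ σ, mallows n θ σ₀ σ * kendall n σ σ₀ = ∑ q, discordProb n θ σ₀ q := by
  simp only [kendall_eq_sum_discordInd, mul_sum]
  exact sum_comm

noncomputable def mixDiscordProb (n : ℕ) (θg θb r : ℝ) (σ₀ : Perm (Fin n))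
    (q : Fin n × Fin n) : ℝ :=
  r * discordProb n θg σ₀ q + (1 - r) * discordProb n θb σ₀ q

lemma meanDistMix_eq (θg θb r θ : ℝ) (σ₀ : Perm (Fin n)) :
    meanDistMix n θg θb r θ σ₀ = ∑ q, (discordProb n θ σ₀ q + mixDiscordProb n θg θb r σ₀ q -
      2 * discordProb n θ σ₀ q * mixDiscordProb n θg θb r σ₀ q) := by
  set ν := fun σ' => r * mallows n θg σ₀ σ' + (1 - r) * mallows n θb σ₀ σ'
  have hν : ∑ σ', ν σ' = 1 := by
    rw [sum_add_distrib, ← mul_sum, ← mul_sum, sum_mallows, sum_mallows]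
    ring
  have hmix : ∀ q, ∑ σ', ν σ' * discordInd σ' σ₀ q = mixDiscordProb n θg θb r σ₀ q := fun q => by
    simp only [ν, add_mul, mul_assoc, sum_add_distrib, ← mul_sum]
    rfl
  calc meanDistMix n θg θb r θ σ₀
      = ∑ q, ∑ σ, mallows n θ σ₀ σ * ∑ σ', ν σ' * discordInd σ σ' q := by
        simp only [meanDistMix, kendall_eq_sum_discordInd, mul_sum]
        exact (sum_congr rfl fun _ _ => sum_comm).trans sum_comm
    _ = _ := sum_congr rfl fun q _ => by
        rw [sum_mul_sum_mul_of_eq_xor (sum_mallows θ σ₀) hν _ _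
          fun σ σ' => discordInd_eq_xor σ σ' σ₀ q, hmix]
        rfl

lemma mixture_gap_ge {β γ r m : ℝ} (hγ : 0 ≤ γ) (hγβ : γ ≤ β) (hβ : β ≤ 1 / 2) (hr0 : 0 ≤ r)
    (hr1 : r ≤ 1) (hm : m = r * γ + (1 - r) * β) :
    r * (β - 2 * γ) ≤ (β + m - 2 * β * m) - (γ + m - 2 * γ * m) := by
  subst hm
  nlinarith [mul_nonneg (mul_nonneg (sub_nonneg.2 hr1) (by linarith : (0 : ℝ) ≤ 1 - 2 * β))
    (sub_nonneg.2 hγβ), mul_nonneg (mul_nonneg hr0 hγ) (by linarith : (0 : ℝ) ≤ 1 + 2 * γ - 2 * β)]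

end Mallows

theorem mixture_mean_distance_separation_general (n : ℕ) (θg θb r c : ℝ) (hb : 0 < θb)
    (hbg : θb < θg) (hr0 : 0 ≤ r) (hr1 : r ≤ 1)
    (σ₀ : Equiv.Perm (Fin n))
    (hsep : (∑ β : Equiv.Perm (Fin n), mallows n θb σ₀ β * kendall n β σ₀) ≥
      c * ∑ γ : Equiv.Perm (Fin n), mallows n θg σ₀ γ * kendall n γ σ₀) :
    meanDistMix n θg θb r θb σ₀ - meanDistMix n θg θb r θg σ₀ ≥
      (c - 2) * r * ∑ γ : Equiv.Perm (Fin n), mallows n θg σ₀ γ * kendall n γ σ₀ := by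
  open Mallows in
  rw [sum_mallows_mul_kendall, sum_mallows_mul_kendall] at hsep
  rw [sum_mallows_mul_kendall, meanDistMix_eq, meanDistMix_eq, ← sum_sub_distrib]
  calc (c - 2) * r * ∑ q, discordProb n θg σ₀ q
      ≤ r * (∑ q, discordProb n θb σ₀ q - 2 * ∑ q, discordProb n θg σ₀ q) := by
        nlinarith [mul_le_mul_of_nonneg_left hsep hr0]
    _ = ∑ q, r * (discordProb n θb σ₀ q - 2 * discordProb n θg σ₀ q) := by
        rw [← mul_sum, sum_sub_distrib, ← mul_sum]
    _ ≤ _ := sum_le_sum fun q _ => mixture_gap_ge (discordProb_nonneg θg σ₀ q)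
        (discordProb_antitone hbg.le σ₀ q) (discordProb_le_half hb.le σ₀ q) hr0 hr1 rfl

/-- Separation of the expected mean distances of the two components of a concentric
Mallows mixture: if `E[d(β,σ₀)] ≥ c·E[d(γ,σ₀)]` with `c ≥ 2`, then
`E[δ_β] − E[δ_γ] ≥ (c−2)·r·E[d(γ,σ₀)]`. -/
theorem mixture_mean_distance_separation (n : ℕ) (θg θb r c : ℝ) (hb : 0 < θb)
    (hbg : θb < θg) (hr0 : 0 ≤ r) (hr1 : r ≤ 1) (hc : 2 ≤ c)
    (σ₀ : Equiv.Perm (Fin n))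
    (hsep : (∑ β : Equiv.Perm (Fin n), mallows n θb σ₀ β * kendall n β σ₀) ≥
      c * ∑ γ : Equiv.Perm (Fin n), mallows n θg σ₀ γ * kendall n γ σ₀) :
    meanDistMix n θg θb r θb σ₀ - meanDistMix n θg θb r θg σ₀ ≥
      (c - 2) * r * ∑ γ : Equiv.Perm (Fin n), mallows n θg σ₀ γ * kendall n γ σ₀ :=
  mixture_mean_distance_separation_general n θg θb r c hb hbg hr0 hr1 σ₀ hsep
end

section
/- Let S be a sample of m i.i.d. permutations from M(σ_0, θ). For a fixed pair of items i, j with σ_0(i) < σ_0(j), the probability that a single Mallows sample ranks i before j is at least 1/2 + δ for some δ > 0 depending on θ and n; consequently, by Hoeffding's inequality, the majority vote over m samples orders i before j with probability at least 1 − exp(−2mδ²), and Borda count recovers the full ranking σ_0 with probability ≥ 1−ε when m = O(δ^{-2} log(n/ε)). -/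
open Finset

/-
If σ₀ and σ both rank i before j, exchanging the ranks of i and j in σ strictly increases
the Kendall distance to σ₀, so `mallows (σ * swap i j) ≤ e^{-θ} * mallows σ`. Pairing σ with
`σ * swap i j` gives `P(i before j) ≥ 1 / (1 + e^{-θ}) = 1/2 + δ` and
`E[rank j - rank i] ≥ 2δ`. Hoeffding's inequality for the m i.i.d. samples then bounds the
failure probability of the majority vote by `exp (-2mδ²)` and that of the Borda comparison
of one pair by `exp (-2mδ²/n²)`; a union bound over the fewer than n² pairs finishes.
-/

open Equiv

section Samples

open Real MeasureTheory ProbabilityTheory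

variable {α : Type*} [Fintype α] {w : α → ℝ}

theorem sum_prod_eq_pow_sum (g : α → ℝ) (m : ℕ) :
    ∑ S : Fin m → α, ∏ l, g (S l) = (∑ x, g x) ^ m := by
  rw [← Fintype.prod_sum, prod_const, card_univ, Fintype.card_fin]

theorem sum_filter_prod_eq_one_sub (hw : ∑ x, w x = 1) {m : ℕ} (P : (Fin m → α) → Prop)
    [DecidablePred P] :
    ∑ S with P S, ∏ l, w (S l) = 1 - ∑ S with ¬P S, ∏ l, w (S l) := by
  rw [eq_sub_iff_add_eq, sum_filter_add_sum_filter_not, sum_prod_eq_pow_sum, hw, one_pow]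

theorem sum_filter_prod_le_pow_sum_mul_exp (hw : ∀ x, 0 ≤ w x) (g : α → ℝ) (m : ℕ) :
    ∑ S : Fin m → α with 0 ≤ ∑ l, g (S l), ∏ l, w (S l) ≤ (∑ x, w x * exp (g x)) ^ m := by
  rw [← sum_prod_eq_pow_sum]
  calc _ ≤ ∑ S : Fin m → α with 0 ≤ ∑ l, g (S l), ∏ l, (w (S l) * exp (g (S l))) := by
        refine sum_le_sum fun S hS => ?_
        rw [prod_mul_distrib, ← exp_sum]
        exact le_mul_of_one_le_right (prod_nonneg fun l _ => hw _)
          (one_le_exp (mem_filter.1 hS).2)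
    _ ≤ _ := sum_le_sum_of_subset_of_nonneg (subset_univ _)
        fun S _ _ => prod_nonneg fun l _ => mul_nonneg (hw _) (exp_pos _).le

/-- Hoeffding's lemma for the finite distribution `w`. -/
theorem sum_mul_exp_le_of_mem_Icc (hw0 : ∀ x, 0 ≤ w x) (hw1 : ∑ x, w x = 1) {f : α → ℝ}
    {a b : ℝ} (hf : ∀ x, f x ∈ Set.Icc a b) (t : ℝ) :
    ∑ x, w x * exp (t * f x) ≤ exp (t * ∑ x, w x * f x + (b - a) ^ 2 * t ^ 2 / 8) := by
  let _ : MeasurableSpace α := ⊤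
  have hsum : ∑ x, ENNReal.ofReal (w x) = 1 := by
    rw [← ENNReal.ofReal_sum_of_nonneg fun x _ => hw0 x, hw1, ENNReal.ofReal_one]
  set μ := (PMF.ofFintype _ hsum).toMeasure
  have hint (g : α → ℝ) : ∫ x, g x ∂μ = ∑ x, w x * g x := by
    simp [μ, PMF.integral_eq_sum, ENNReal.toReal_ofReal (hw0 _)]
  have hab : a ≤ b := by
    obtain ⟨x⟩ : Nonempty α := by
      by_contra h; rw [not_nonempty_iff] at h; simp at hw1
    exact (hf x).1.trans (hf x).2
  have hoeffding := (hasSubgaussianMGF_of_mem_Icc (μ := μ) (by fun_prop)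
    (Filter.Eventually.of_forall hf)).mgf_le t
  rw [mgf, hint, hint] at hoeffding
  have hnorm : ((‖b - a‖₊ / 2) ^ 2 : NNReal) * t ^ 2 / 2 = (b - a) ^ 2 * t ^ 2 / 8 := by
    push_cast
    rw [Real.norm_of_nonneg (sub_nonneg.2 hab)]
    ring
  calc ∑ x, w x * exp (t * f x)
      = exp (t * ∑ x, w x * f x) * ∑ x, w x * exp (t * (f x - ∑ y, w y * f y)) := by
        rw [mul_sum]
        congr 1 with x
        rw [mul_left_comm, ← exp_add]
        ring_nf
    _ ≤ _ := by
        rw [exp_add, ← hnorm]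
        gcongr

/-- Hoeffding's inequality for `m` i.i.d. samples from `w`. -/
theorem sum_filter_prod_le_exp_of_mem_Icc (hw0 : ∀ x, 0 ≤ w x) (hw1 : ∑ x, w x = 1)
    {f : α → ℝ} {a b μ : ℝ} (hf : ∀ x, f x ∈ Set.Icc a b) (hμ : 0 ≤ μ)
    (hmean : ∑ x, w x * f x ≤ -μ) (m : ℕ) :
    ∑ S : Fin m → α with 0 ≤ ∑ l, f (S l), ∏ l, w (S l) ≤
      exp (-2 * m * μ ^ 2 / (b - a) ^ 2) := by
  set t := 4 * μ / (b - a) ^ 2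
  have ht : 0 ≤ t := by positivity
  have hexponent : -t * μ + (b - a) ^ 2 * t ^ 2 / 8 = -2 * μ ^ 2 / (b - a) ^ 2 := by
    rcases eq_or_ne ((b - a) ^ 2) 0 with h | h
    · simp [t, h]
    · simp only [t]
      field_simp
      ring
  have hsingle : ∑ x, w x * exp (t * f x) ≤ exp (-2 * μ ^ 2 / (b - a) ^ 2) := by
    refine (sum_mul_exp_le_of_mem_Icc hw0 hw1 hf t).trans ?_
    rw [← hexponent]
    exact exp_le_exp.2 (by nlinarith [mul_le_mul_of_nonneg_left hmean ht])
  have hmul (S : Fin m → α) (hS : 0 ≤ ∑ l, f (S l)) : 0 ≤ ∑ l, t * f (S l) := by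
    rw [← mul_sum]
    exact mul_nonneg ht hS
  calc _ ≤ ∑ S : Fin m → α with 0 ≤ ∑ l, t * f (S l), ∏ l, w (S l) :=
        sum_le_sum_of_subset_of_nonneg (monotone_filter_right _ fun S _ => hmul S)
          fun S _ _ => prod_nonneg fun l _ => hw0 _
    _ ≤ (∑ x, w x * exp (t * f x)) ^ m :=
        sum_filter_prod_le_pow_sum_mul_exp hw0 (fun x => t * f x) m
    _ ≤ exp (-2 * μ ^ 2 / (b - a) ^ 2) ^ m :=
        pow_le_pow_left₀ (sum_nonneg fun x _ => mul_nonneg (hw0 x) (exp_pos _).le) hsingle m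
    _ = _ := by
        rw [← exp_nat_mul]
        ring_nf

end Samples

theorem sum_filter_le_sum_sum_filter {β ι : Type*} [Fintype β] {W : β → ℝ} (hW : ∀ x, 0 ≤ W x)
    {s : Finset ι} {Q : β → Prop} {P : ι → β → Prop} [DecidablePred Q]
    [∀ q, DecidablePred (P q)] (hQ : ∀ x, Q x → ∃ q ∈ s, P q x) :
    ∑ x with Q x, W x ≤ ∑ q ∈ s, ∑ x with P q x, W x := by
  simp only [sum_filter]
  rw [sum_comm]
  refine sum_le_sum fun x _ => ?_
  have hterm (q : ι) : 0 ≤ if P q x then W x else 0 := by split_ifs <;> simp [hW]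
  split_ifs with hx
  · obtain ⟨q, hq, hpq⟩ := hQ x hx
    simpa [hpq] using single_le_sum (fun q _ => hterm q) hq
  · exact sum_nonneg fun q _ => hterm q

open Real in
theorem sq_mul_exp_le_of_le {N δ ε m : ℝ} (hN : 1 ≤ N) (hδ : 0 < δ) (hε0 : 0 < ε) (hε1 : ε < 1)
    (hm : (N ^ 2 + 1) * δ⁻¹ ^ 2 * log (N / ε) ≤ m) :
    N ^ 2 * exp (-2 * m * δ ^ 2 / N ^ 2) ≤ ε := by
  have hN0 : 0 < N := by linarith
  have hlogN : 0 ≤ log N := log_nonneg hN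
  have hlogε : log ε < 0 := log_neg hε0 hε1
  have hL : log (N / ε) = log N - log ε := log_div hN0.ne' hε0.ne'
  have hmδ : (N ^ 2 + 1) * log (N / ε) ≤ m * δ ^ 2 := by
    calc _ = (N ^ 2 + 1) * δ⁻¹ ^ 2 * log (N / ε) * δ ^ 2 := by field_simp
      _ ≤ m * δ ^ 2 := by gcongr
  have hexp : -2 * m * δ ^ 2 / N ^ 2 ≤ log (ε / N ^ 2) := by
    rw [log_div hε0.ne' (by positivity), log_pow, div_le_iff₀ (by positivity)]
    push_cast
    nlinarith
  calc N ^ 2 * exp (-2 * m * δ ^ 2 / N ^ 2) ≤ N ^ 2 * (ε / N ^ 2) := by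
        gcongr
        exact (exp_le_exp.2 hexp).trans_eq (exp_log (by positivity))
    _ = ε := by field_simp

section Kendall

variable {n : ℕ}

theorem kendall_eq_card (σ π : Perm (Fin n)) :
    kendall n σ π = #{p : Fin n × Fin n | σ p.1 < σ p.2 ∧ π p.2 < π p.1} := by
  refine card_nbij' (fun p => if σ p.1 < σ p.2 then p else p.swap)
    (fun p => if p.1 < p.2 then p else p.swap) ?_ ?_ ?_ ?_
  all_goals
    rintro ⟨a, b⟩ hp
    simp only [coe_filter, mem_univ, true_and, Set.mem_ofPred_eq] at hp
    grind

def ordInd (σ : Perm (Fin n)) (p : Fin n × Fin n) : ℤ := if σ p.1 < σ p.2 then 1 else 0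

theorem kendall_eq_sum_ordInd (σ π : Perm (Fin n)) :
    (kendall n σ π : ℤ) = ∑ p, ordInd σ p * (1 - ordInd π p) := by
  rw [kendall_eq_card, card_filter]
  push_cast
  refine sum_congr rfl fun p _ => ?_
  have : p.1 ≠ p.2 → π p.1 ≠ π p.2 := fun h e => h (π.injective e)
  unfold ordInd
  split_ifs <;> grind

-- Whether exchanging the ranks of `i` and `j` can create or only destroy `σ a < σ b` depends
-- on `(a, b)` alone, as long as `σ` ranks `i` before `j`.
theorem lt_of_swap_lt {σ : Perm (Fin n)} {i j a b : Fin n} (h : σ i < σ j)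
    (hab : a = i ∨ b = j) (hs : σ (swap i j a) < σ (swap i j b)) : σ a < σ b := by
  grind

theorem swap_lt_of_lt {σ : Perm (Fin n)} {i j a b : Fin n} (h : σ i < σ j)
    (hab : ¬(a = i ∨ b = j)) (hs : σ a < σ b) : σ (swap i j a) < σ (swap i j b) := by
  grind

theorem ordInd_sub_swap_mul_nonneg {σ π : Perm (Fin n)} {i j : Fin n} (hσ : σ i < σ j)
    (hπ : π i < π j) (p : Fin n × Fin n) :
    0 ≤ (ordInd σ p - ordInd σ (Prod.map (swap i j) (swap i j) p)) *
      (ordInd π p - ordInd π (Prod.map (swap i j) (swap i j) p)) := by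
  obtain ⟨a, b⟩ := p
  unfold ordInd
  simp only [Prod.map]
  by_cases hab : a = i ∨ b = j
  · have := lt_of_swap_lt hσ hab
    have := lt_of_swap_lt hπ hab
    split_ifs <;> simp_all
  · have := swap_lt_of_lt hσ hab
    have := swap_lt_of_lt hπ hab
    split_ifs <;> simp_all

theorem kendall_add_one_le_kendall_mul_swap {σ π : Perm (Fin n)} {i j : Fin n}
    (hσ : σ i < σ j) (hπ : π i < π j) :
    kendall n σ π + 1 ≤ kendall n (σ * swap i j) π := by
  set τ := (swap i j).prodCongr (swap i j)
  have hij : (i, j) ≠ (j, i) := fun e => hσ.ne (by rw [(Prod.mk.inj e).1])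
  set A := ordInd σ
  set B := ordInd π
  have hK : (kendall n σ π : ℤ) = ∑ p, A p * (1 - B p) := kendall_eq_sum_ordInd σ π
  have hK' : (kendall n (σ * swap i j) π : ℤ) = ∑ p, A (τ p) * (1 - B p) :=
    kendall_eq_sum_ordInd _ π
  have hKτ : (kendall n σ π : ℤ) = ∑ p, A (τ p) * (1 - B (τ p)) := by
    rw [hK, τ.sum_comp (fun p => A p * (1 - B p))]
  have hK'τ : (kendall n (σ * swap i j) π : ℤ) = ∑ p, A p * (1 - B (τ p)) := by
    rw [hK', ← τ.sum_comp]
    simp [τ, Prod.map]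
  have hdiff : 2 * ((kendall n (σ * swap i j) π : ℤ) - kendall n σ π)
      = ∑ p, (A p - A (τ p)) * (B p - B (τ p)) := by
    calc _ = (∑ p, A (τ p) * (1 - B p) + ∑ p, A p * (1 - B (τ p)))
          - (∑ p, A p * (1 - B p) + ∑ p, A (τ p) * (1 - B (τ p))) := by
          rw [← hK', ← hK'τ, ← hK, ← hKτ]
          ring
      _ = _ := by
          rw [← sum_add_distrib, ← sum_add_distrib, ← sum_sub_distrib]
          exact sum_congr rfl fun p _ => by ring
  have hpos : 2 ≤ ∑ p, (A p - A (τ p)) * (B p - B (τ p)) := by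
    calc (2 : ℤ) = ∑ p ∈ {(i, j), (j, i)}, (A p - A (τ p)) * (B p - B (τ p)) := by
          rw [sum_pair hij]
          simp [A, B, τ, ordInd, hσ, hπ, hσ.not_gt, hπ.not_gt]
      _ ≤ _ := sum_le_sum_of_subset_of_nonneg (subset_univ _)
          fun p _ _ => ordInd_sub_swap_mul_nonneg hσ hπ p
  omega

end Kendall

open Real

noncomputable def mallowsBias (θ : ℝ) : ℝ := (1 - exp (-θ)) / (2 * (1 + exp (-θ)))

section Mallows

variable {n : ℕ} {θ : ℝ} {σ₀ : Perm (Fin n)}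

theorem mallowsBias_pos (hθ : 0 < θ) : 0 < mallowsBias θ := by
  have : exp (-θ) < 1 := exp_lt_one_iff.2 (neg_lt_zero.2 hθ)
  unfold mallowsBias
  apply div_pos <;> linarith [exp_pos (-θ)]

theorem mallowsBias_nonneg (hθ : 0 ≤ θ) : 0 ≤ mallowsBias θ := by
  have : exp (-θ) ≤ 1 := exp_le_one_iff.2 (neg_nonpos.2 hθ)
  unfold mallowsBias
  apply div_nonneg <;> linarith [exp_pos (-θ)]

theorem half_add_mallowsBias_eq (θ : ℝ) : 1 / 2 + mallowsBias θ = 1 / (1 + exp (-θ)) := by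
  have := exp_pos (-θ)
  unfold mallowsBias
  field_simp
  ring

theorem mallows_nonneg (θ : ℝ) (σ₀ σ : Perm (Fin n)) : 0 ≤ mallows n θ σ₀ σ :=
  div_nonneg (exp_pos _).le (sum_nonneg fun _ _ => (exp_pos _).le)

theorem sum_mallows (θ : ℝ) (σ₀ : Perm (Fin n)) : ∑ σ, mallows n θ σ₀ σ = 1 := by
  simp only [mallows]
  rw [← sum_div]
  exact div_self (sum_pos (fun _ _ => exp_pos _) univ_nonempty).ne'

theorem mallows_mul_swap_le (hθ : 0 ≤ θ) {σ : Perm (Fin n)} {i j : Fin n} (h₀ : σ₀ i < σ₀ j)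
    (h : σ i < σ j) : mallows n θ σ₀ (σ * swap i j) ≤ exp (-θ) * mallows n θ σ₀ σ := by
  have hK : (kendall n σ σ₀ : ℝ) + 1 ≤ kendall n (σ * swap i j) σ₀ := by
    exact_mod_cast kendall_add_one_le_kendall_mul_swap h h₀
  rw [mallows, mallows, ← mul_div_assoc, ← exp_add]
  gcongr
  nlinarith

theorem sum_eq_sum_filter_lt_add_mul_swap {M : Type*} [AddCommMonoid M] {i j : Fin n}
    (hij : i ≠ j) (f : Perm (Fin n) → M) :
    ∑ σ, f σ = ∑ σ with σ i < σ j, (f σ + f (σ * swap i j)) := by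
  rw [sum_add_distrib, ← sum_filter_add_sum_filter_not univ (fun σ : Perm (Fin n) => σ i < σ j)]
  congr 1
  refine sum_nbij' (· * swap i j) (· * swap i j) ?_ ?_ ?_ ?_ ?_ <;> intro σ hσ
  · simp_all [(σ.injective.ne hij.symm).le_iff_lt]
  · simp_all [le_of_lt]
  all_goals simp [mul_assoc]

theorem half_add_mallowsBias_le_sum_mallows_lt (hθ : 0 ≤ θ) {i j : Fin n}
    (h₀ : σ₀ i < σ₀ j) :
    1 / 2 + mallowsBias θ ≤ ∑ σ with σ i < σ j, mallows n θ σ₀ σ := by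
  have hij : i ≠ j := fun e => h₀.ne (by rw [e])
  have hsplit := sum_eq_sum_filter_lt_add_mul_swap hij (mallows n θ σ₀)
  rw [sum_mallows] at hsplit
  have : ∑ σ with σ i < σ j, (mallows n θ σ₀ σ + mallows n θ σ₀ (σ * swap i j))
      ≤ (1 + exp (-θ)) * ∑ σ with σ i < σ j, mallows n θ σ₀ σ := by
    rw [mul_sum]
    refine sum_le_sum fun σ hσ => ?_
    linarith [mallows_mul_swap_le hθ h₀ (mem_filter.1 hσ).2]
  rw [half_add_mallowsBias_eq, div_le_iff₀ (by positivity)]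
  linarith

theorem two_mul_mallowsBias_le_sum_mallows_mul_sub (hθ : 0 ≤ θ) {i j : Fin n}
    (h₀ : σ₀ i < σ₀ j) :
    2 * mallowsBias θ ≤ ∑ σ, mallows n θ σ₀ σ * (((σ j : ℕ) : ℝ) - ((σ i : ℕ) : ℝ)) := by
  have hij : i ≠ j := fun e => h₀.ne (by rw [e])
  have hc : exp (-θ) ≤ 1 := exp_le_one_iff.2 (neg_nonpos.2 hθ)
  calc 2 * mallowsBias θ = (1 - exp (-θ)) * (1 / 2 + mallowsBias θ) := by
        rw [half_add_mallowsBias_eq]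
        unfold mallowsBias
        field_simp
    _ ≤ (1 - exp (-θ)) * ∑ σ with σ i < σ j, mallows n θ σ₀ σ :=
        mul_le_mul_of_nonneg_left (half_add_mallowsBias_le_sum_mallows_lt hθ h₀) (by linarith)
    _ ≤ _ := by
        rw [sum_eq_sum_filter_lt_add_mul_swap hij, mul_sum]
        refine sum_le_sum fun σ hσ => ?_
        have hlt : ((σ i : ℕ) : ℝ) + 1 ≤ (σ j : ℕ) := by exact_mod_cast (mem_filter.1 hσ).2
        have hswap := mallows_mul_swap_le hθ h₀ (mem_filter.1 hσ).2
        have hle : mallows n θ σ₀ (σ * swap i j) ≤ mallows n θ σ₀ σ :=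
          hswap.trans (mul_le_of_le_one_left (mallows_nonneg θ σ₀ σ) hc)
        simp only [Perm.mul_apply, swap_apply_left, swap_apply_right]
        nlinarith [mul_le_mul_of_nonneg_left hlt (sub_nonneg.2 hle)]

theorem one_sub_exp_le_sum_majority (hθ : 0 ≤ θ) {i j : Fin n} (h₀ : σ₀ i < σ₀ j) (m : ℕ) :
    1 - exp (-2 * m * mallowsBias θ ^ 2) ≤
      ∑ S : Fin m → Perm (Fin n) with (m : ℝ) / 2 < #{l | S l i < S l j},
        ∏ l, mallows n θ σ₀ (S l) := by
  let f : Perm (Fin n) → ℝ := fun σ => 1 / 2 - if σ i < σ j then 1 else 0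
  have hf (σ : Perm (Fin n)) : f σ ∈ Set.Icc (-1 / 2) (1 / 2) := by
    simp only [f]
    constructor <;> split_ifs <;> norm_num
  have hmean : ∑ σ, mallows n θ σ₀ σ * f σ ≤ -mallowsBias θ := by
    have := half_add_mallowsBias_le_sum_mallows_lt hθ h₀
    simp only [f, mul_sub, mul_ite, mul_one, mul_zero, sum_sub_distrib, ← sum_mul,
      sum_mallows, ← sum_filter]
    linarith
  have hevent (S : Fin m → Perm (Fin n)) :
      ¬(m : ℝ) / 2 < #{l | S l i < S l j} ↔ 0 ≤ ∑ l, f (S l) := by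
    simp only [f, sum_sub_distrib, sum_boole, sum_const, card_univ, Fintype.card_fin]
    rw [nsmul_eq_mul, not_lt, sub_nonneg, mul_one_div]
  have := sum_filter_prod_le_exp_of_mem_Icc (mallows_nonneg θ σ₀) (sum_mallows θ σ₀) hf
    (mallowsBias_nonneg hθ) hmean m
  rw [show (1 / 2 - -1 / 2 : ℝ) ^ 2 = 1 by norm_num, div_one] at this
  rw [sum_filter_prod_eq_one_sub (sum_mallows θ σ₀), filter_congr fun S _ => hevent S]
  linarith

theorem sum_borda_not_lt_le_exp (hθ : 0 ≤ θ) {i j : Fin n} (h₀ : σ₀ i < σ₀ j) (m : ℕ) :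
    ∑ S : Fin m → Perm (Fin n) with ¬∑ l, ((S l i : ℕ) : ℝ) < ∑ l, ((S l j : ℕ) : ℝ),
      ∏ l, mallows n θ σ₀ (S l) ≤ exp (-2 * m * mallowsBias θ ^ 2 / (n : ℝ) ^ 2) := by
  let f : Perm (Fin n) → ℝ := fun σ => ((σ i : ℕ) : ℝ) - ((σ j : ℕ) : ℝ)
  have hf (σ : Perm (Fin n)) : f σ ∈ Set.Icc (-(n : ℝ)) n := by
    have hi : ((σ i : ℕ) : ℝ) < n := by exact_mod_cast (σ i).isLt
    have hj : ((σ j : ℕ) : ℝ) < n := by exact_mod_cast (σ j).isLt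
    constructor <;> simp only [f] <;>
      linarith [Nat.cast_nonneg (α := ℝ) (σ i : ℕ), Nat.cast_nonneg (α := ℝ) (σ j : ℕ)]
  have hmean : ∑ σ, mallows n θ σ₀ σ * f σ ≤ -(2 * mallowsBias θ) := by
    have := two_mul_mallowsBias_le_sum_mallows_mul_sub hθ h₀
    have hneg (σ : Perm (Fin n)) : mallows n θ σ₀ σ * f σ
        = -(mallows n θ σ₀ σ * (((σ j : ℕ) : ℝ) - ((σ i : ℕ) : ℝ))) := by ring
    rw [sum_congr rfl fun σ _ => hneg σ, sum_neg_distrib]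
    linarith
  have hevent (S : Fin m → Perm (Fin n)) :
      ¬∑ l, ((S l i : ℕ) : ℝ) < ∑ l, ((S l j : ℕ) : ℝ) ↔ 0 ≤ ∑ l, f (S l) := by
    rw [not_lt, ← sub_nonneg, ← sum_sub_distrib]
  have := sum_filter_prod_le_exp_of_mem_Icc (mallows_nonneg θ σ₀) (sum_mallows θ σ₀) hf
    (by linarith [mallowsBias_nonneg hθ]) hmean m
  rw [filter_congr fun S _ => hevent S]
  convert this using 2
  ring

theorem one_sub_le_sum_borda_correct (hθ : 0 < θ) (σ₀ : Perm (Fin n)) {ε : ℝ} (hε0 : 0 < ε)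
    (hε1 : ε < 1) {m : ℕ} (hm : ((n : ℝ) ^ 2 + 1) * (mallowsBias θ)⁻¹ ^ 2 * log (n / ε) ≤ m) :
    1 - ε ≤ ∑ S : Fin m → Perm (Fin n) with
        ∀ i j, σ₀ i < σ₀ j → ∑ l, ((S l i : ℕ) : ℝ) < ∑ l, ((S l j : ℕ) : ℝ),
      ∏ l, mallows n θ σ₀ (S l) := by
  rw [sum_filter_prod_eq_one_sub (sum_mallows θ σ₀), sub_le_sub_iff_left]
  rcases Nat.eq_zero_or_pos n with rfl | hn
  · simp [hε0.le]
  have hpairs : (#{q : Fin n × Fin n | σ₀ q.1 < σ₀ q.2} : ℝ) ≤ (n : ℝ) ^ 2 := by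
    have := card_filter_le (univ : Finset (Fin n × Fin n)) fun q => σ₀ q.1 < σ₀ q.2
    rw [card_univ, Fintype.card_prod, Fintype.card_fin] at this
    rw [sq]
    exact_mod_cast this
  calc _ ≤ ∑ q : Fin n × Fin n with σ₀ q.1 < σ₀ q.2, ∑ S : Fin m → Perm (Fin n) with
          ¬∑ l, ((S l q.1 : ℕ) : ℝ) < ∑ l, ((S l q.2 : ℕ) : ℝ), ∏ l, mallows n θ σ₀ (S l) := by
        refine sum_filter_le_sum_sum_filter
          (fun S => prod_nonneg fun l _ => mallows_nonneg θ σ₀ (S l)) fun S hS => ?_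
        push Not at hS
        obtain ⟨i, j, h₀, hji⟩ := hS
        exact ⟨(i, j), mem_filter.2 ⟨mem_univ _, h₀⟩, not_lt.2 hji⟩
    _ ≤ ∑ q : Fin n × Fin n with σ₀ q.1 < σ₀ q.2,
          exp (-2 * m * mallowsBias θ ^ 2 / (n : ℝ) ^ 2) :=
        sum_le_sum fun q hq => sum_borda_not_lt_le_exp hθ.le (mem_filter.1 hq).2 m
    _ ≤ (n : ℝ) ^ 2 * exp (-2 * m * mallowsBias θ ^ 2 / (n : ℝ) ^ 2) := by
        rw [sum_const, nsmul_eq_mul]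
        gcongr
    _ ≤ ε := sq_mul_exp_le_of_le (by exact_mod_cast hn) (mallowsBias_pos hθ) hε0 hε1 hm

end Mallows

/-- Sample complexity of Borda for Mallows samples. There is a pairwise bias `δ > 0`
(depending on `θ` and `n`) such that: (1) a single Mallows sample ranks `i` before `j`
with probability at least `1/2 + δ` whenever `σ₀` does; (2) by Hoeffding, the majority
vote over `m` i.i.d. samples orders `i` before `j` with probability at least
`1 − exp(−2mδ²)`; and (3) there is a constant `C > 0` such that for
`m ≥ C δ⁻² log(n/ε)`, Borda (sorting by total/average rank) recovers the full ranking
`σ₀`, i.e. the Borda scores strictly respect `σ₀` on every pair, with probability at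
least `1 − ε`. -/
theorem borda_sample_complexity (n : ℕ) (θ : ℝ) (hθ : 0 < θ)
    (σ₀ : Equiv.Perm (Fin n)) :
    ∃ δ : ℝ, 0 < δ ∧
      (∀ i j : Fin n, σ₀ i < σ₀ j →
        1 / 2 + δ ≤
          ∑ σ ∈ Finset.univ.filter (fun σ : Equiv.Perm (Fin n) => σ i < σ j),
            mallows n θ σ₀ σ) ∧
      (∀ i j : Fin n, σ₀ i < σ₀ j → ∀ m : ℕ,
        1 - Real.exp (-2 * m * δ ^ 2) ≤
          ∑ S ∈ Finset.univ.filter (fun S : Fin m → Equiv.Perm (Fin n) =>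
              (m : ℝ) / 2 < (Finset.univ.filter (fun l : Fin m => S l i < S l j)).card),
            ∏ l : Fin m, mallows n θ σ₀ (S l)) ∧
      ∃ C : ℝ, 0 < C ∧ ∀ ε : ℝ, 0 < ε → ε < 1 → ∀ m : ℕ,
        C * δ⁻¹ ^ 2 * Real.log (n / ε) ≤ m →
        1 - ε ≤
          ∑ S ∈ Finset.univ.filter (fun S : Fin m → Equiv.Perm (Fin n) =>
              ∀ i j : Fin n, σ₀ i < σ₀ j →
                (∑ l : Fin m, ((S l i : ℕ) : ℝ)) < ∑ l : Fin m, ((S l j : ℕ) : ℝ)),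
            ∏ l : Fin m, mallows n θ σ₀ (S l) := by
  refine ⟨mallowsBias θ, mallowsBias_pos hθ,
    fun i j h₀ => half_add_mallowsBias_le_sum_mallows_lt hθ.le h₀,
    fun i j h₀ m => one_sub_exp_le_sum_majority hθ.le h₀ m,
    (n : ℝ) ^ 2 + 1, by positivity,
    fun ε hε0 hε1 m hm => one_sub_le_sum_borda_correct hθ σ₀ hε0 hε1 hm⟩
end
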